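/- Define L_n^{(α)}(x,δ) by the recurrence (n+1)L_{n+1}^{(α)} + (x - (2n+α+1+n(2n+2α+1)δ)) L_n^{(α)} + (n+α)(1+(n-1)δ)(1+(n+α)δ) L_{n-1}^{(α)} = 0 with L_{-1}=0, L_0=1, and similarly L̃_n^{(α)}(x,δ) by (n+1)L̃_{n+1}^{(α)} + (x - (2n+α+1+(n(2n+2α+1)+(α+1)²/4)δ)) L̃_n^{(α)} + (n+α)(1+(n+(α-1)/2)δ)² L̃_{n-1}^{(α)} = 0 with L̃_{-1}=0, L̃_0=1. Then for all n ≥ 0, (n+1) L̃_{n+1}^{(-1)}(x,δ) = -x L̃_n^{(1)}(x,δ). -/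

import Mathlib

open Finset

/-- Deformed Laguerre polynomials `L_n^{(α)}(x,δ)` (C-type) defined by the recurrence
`(n+1) L_{n+1} + (x - (2n+α+1+n(2n+2α+1)δ)) L_n + (n+α)(1+(n-1)δ)(1+(n+α)δ) L_{n-1} = 0`,
`L_{-1} = 0`, `L_0 = 1`. -/
noncomputable def deformedLaguerre (α δ : ℝ) : ℕ → ℝ → ℝ
  | 0, _ => 1
  | 1, x => α + 1 - x
  | (n + 2), x =>
      (((2 * ((n : ℝ) + 1) + α + 1 + ((n : ℝ) + 1) * (2 * ((n : ℝ) + 1) + 2 * α + 1) * δ) - x)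
          * deformedLaguerre α δ (n + 1) x
        - ((n : ℝ) + 1 + α) * (1 + (n : ℝ) * δ) * (1 + ((n : ℝ) + 1 + α) * δ)
          * deformedLaguerre α δ n x) / ((n : ℝ) + 2)

/-- Deformed Laguerre polynomials `L̃_n^{(α)}(x,δ)` (B-type) defined by the recurrence
`(n+1) L̃_{n+1} + (x - (2n+α+1+(n(2n+2α+1)+(α+1)²/4)δ)) L̃_n
  + (n+α)(1+(n+(α-1)/2)δ)² L̃_{n-1} = 0`, `L̃_{-1} = 0`, `L̃_0 = 1`. -/
noncomputable def deformedLaguerreB (α δ : ℝ) : ℕ → ℝ → ℝ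
  | 0, _ => 1
  | 1, x => α + 1 + (α + 1) ^ 2 / 4 * δ - x
  | (n + 2), x =>
      (((2 * ((n : ℝ) + 1) + α + 1
            + (((n : ℝ) + 1) * (2 * ((n : ℝ) + 1) + 2 * α + 1) + (α + 1) ^ 2 / 4) * δ) - x)
          * deformedLaguerreB α δ (n + 1) x
        - ((n : ℝ) + 1 + α) * (1 + ((n : ℝ) + 1 + (α - 1) / 2) * δ) ^ 2
          * deformedLaguerreB α δ n x) / ((n : ℝ) + 2)

/-!
Both sides satisfy the recurrence
`(n+2) w_{n+2} = (2(n+2) + (n+2)(2n+3)δ - x) w_{n+1} - (n+2)(1+(n+1)δ)² w_n`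
and agree for `n = 0, 1`. For `-x L̃^{(1)}_n` it is the defining recurrence of `L̃^{(1)}`; for
`(n+1) L̃^{(-1)}_{n+1}` it is the recurrence of `L̃^{(-1)}` shifted by one step, whose coefficients
are those of `L̃^{(1)}` up to the factors `n+1` absorbed by the rescaling.
-/

theorem eq_of_second_order_recurrence {R : Type*} {u v : ℕ → R} (step : ℕ → R → R → R)
    (hu : ∀ n, u (n + 2) = step n (u n) (u (n + 1)))
    (hv : ∀ n, v (n + 2) = step n (v n) (v (n + 1)))
    (h0 : u 0 = v 0) (h1 : u 1 = v 1) : u = v := by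
  funext n
  induction n using Nat.twoStepInduction with
  | zero => exact h0
  | one => exact h1
  | more n ih0 ih1 => rw [hu, hv, ih0, ih1]

theorem deformedLaguerreB_add_two (α δ x : ℝ) (n : ℕ) :
    ((n : ℝ) + 2) * deformedLaguerreB α δ (n + 2) x =
      ((2 * ((n : ℝ) + 1) + α + 1
            + (((n : ℝ) + 1) * (2 * ((n : ℝ) + 1) + 2 * α + 1) + (α + 1) ^ 2 / 4) * δ) - x)
          * deformedLaguerreB α δ (n + 1) x
        - ((n : ℝ) + 1 + α) * (1 + ((n : ℝ) + 1 + (α - 1) / 2) * δ) ^ 2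
          * deformedLaguerreB α δ n x := by
  rw [deformedLaguerreB]
  field_simp

theorem deformedLaguerreB_one_add_two (δ x : ℝ) (n : ℕ) :
    ((n : ℝ) + 2) * deformedLaguerreB 1 δ (n + 2) x =
      (2 * ((n : ℝ) + 2) + ((n : ℝ) + 2) * (2 * n + 3) * δ - x) * deformedLaguerreB 1 δ (n + 1) x
        - ((n : ℝ) + 2) * (1 + ((n : ℝ) + 1) * δ) ^ 2 * deformedLaguerreB 1 δ n x := by
  rw [deformedLaguerreB_add_two]
  ring

theorem deformedLaguerreB_neg_one_add_three (δ x : ℝ) (n : ℕ) :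
    ((n : ℝ) + 3) * deformedLaguerreB (-1) δ (n + 3) x =
      (2 * ((n : ℝ) + 2) + ((n : ℝ) + 2) * (2 * n + 3) * δ - x)
          * deformedLaguerreB (-1) δ (n + 2) x
        - ((n : ℝ) + 1) * (1 + ((n : ℝ) + 1) * δ) ^ 2 * deformedLaguerreB (-1) δ (n + 1) x := by
  have h := deformedLaguerreB_add_two (-1) δ x (n + 1)
  push_cast at h
  linear_combination h

theorem deformedLaguerreB_identity_general (δ : ℝ) (n : ℕ) (x : ℝ) :
    ((n : ℝ) + 1) * deformedLaguerreB (-1) δ (n + 1) x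
      = -x * deformedLaguerreB 1 δ n x := by
  refine congrFun (eq_of_second_order_recurrence
    (u := fun n => ((n : ℝ) + 1) * deformedLaguerreB (-1) δ (n + 1) x)
    (v := fun n => -x * deformedLaguerreB 1 δ n x)
    (fun n a b => (2 + (2 * (n : ℝ) + 3) * δ - x / ((n : ℝ) + 2)) * b
      - (1 + ((n : ℝ) + 1) * δ) ^ 2 * a) ?_ ?_ ?_ ?_) n
  · intro n
    rw [show n + 2 + 1 = n + 3 from rfl, show n + 1 + 1 = n + 2 from rfl]
    push_cast
    field_simp
    linear_combination ((n : ℝ) + 2) * deformedLaguerreB_neg_one_add_three δ x n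
  · intro n
    field_simp
    linear_combination (-x) * deformedLaguerreB_one_add_two δ x n
  · simp [deformedLaguerreB]
  · simp only [deformedLaguerreB]
    ring

theorem deformedLaguerreB_identity (δ : ℝ) (hδ : 0 < δ) (n : ℕ) (x : ℝ) :
    ((n : ℝ) + 1) * deformedLaguerreB (-1) δ (n + 1) x
      = -x * deformedLaguerreB 1 δ n x :=
  deformedLaguerreB_identity_general δ n x
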